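/- arXiv:1701.02375 — 5 statements merged into one kernel-verified Lean document; each statement's English description precedes it below -/
import Mathlib

section
/- For every ε with 0 < ε ≤ 1/9 and every real t ≥ (1+ε)·√(8ε), we have cosh t ≤ exp((1-ε)·t²/2). -/
/-!
For small `t` we use `log (cosh t) ≤ t²/2 - t⁴/12 + t⁶/45`, obtained by integrating
`tanh t ≤ t - t³/3 + 2t⁵/15`, which in turn comes from bootstrapping `sinh t ≤ t cosh t` and
`(t - t³/3) cosh t ≤ sinh t` through the same derivative comparison. Once `t² ≥ 8ε` the quartic
term absorbs the loss `ε t²/2`. For `t ≥ 5/3` the crude bound `cosh t ≤ exp (4t²/9)` suffices,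
because `4/9 ≤ (1 - ε)/2` when `ε ≤ 1/9`.
-/

open Real Set

lemma le_of_hasDerivAt_le_of_nonneg {f g f' g' : ℝ → ℝ}
    (hf : ∀ x, HasDerivAt f (f' x) x) (hg : ∀ x, HasDerivAt g (g' x) x)
    (h₀ : f 0 ≤ g 0) (hderiv : ∀ x, 0 ≤ x → f' x ≤ g' x) {t : ℝ} (ht : 0 ≤ t) :
    f t ≤ g t := by
  have hd : ∀ x, HasDerivAt (fun y => g y - f y) (g' x - f' x) x := fun x => (hg x).fun_sub (hf x)
  have hmono : MonotoneOn (fun y => g y - f y) (Ici 0) := by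
    refine monotoneOn_of_deriv_nonneg (convex_Ici 0)
      (fun x _ => (hd x).continuousAt.continuousWithinAt)
      (fun x _ => (hd x).differentiableAt.differentiableWithinAt) fun x hx => ?_
    rw [interior_Ici] at hx
    rw [(hd x).deriv]
    exact sub_nonneg.2 (hderiv x hx.le)
  have := hmono self_mem_Ici ht ht
  simp only at this
  linarith

namespace Real

lemma sinh_le_mul_cosh {t : ℝ} (ht : 0 ≤ t) : sinh t ≤ t * cosh t :=
  le_of_hasDerivAt_le_of_nonneg (g := fun x => x * cosh x) hasDerivAt_sinh
    (fun x => (hasDerivAt_id' x).fun_mul (hasDerivAt_cosh x)) (by simp)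
    (fun x hx => by simpa using mul_nonneg hx (sinh_nonneg_iff.2 hx)) ht

lemma sub_pow_three_mul_cosh_le_sinh {t : ℝ} (ht : 0 ≤ t) :
    (t - t ^ 3 / 3) * cosh t ≤ sinh t := by
  refine le_of_hasDerivAt_le_of_nonneg (f := fun x => (x - x ^ 3 / 3) * cosh x)
    (f' := fun x => (1 - x ^ 2) * cosh x + (x - x ^ 3 / 3) * sinh x)
    (fun x => ?_) hasDerivAt_sinh (by simp) (fun x hx => ?_) ht
  · exact (((hasDerivAt_id' x).fun_sub ((hasDerivAt_pow 3 x).div_const 3)).fun_mul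
      (hasDerivAt_cosh x)).congr_deriv (by push_cast; ring)
  · nlinarith [sinh_le_mul_cosh hx, sinh_nonneg_iff.2 hx, pow_nonneg hx 3]

lemma sinh_le_tanh_taylor_mul_cosh {t : ℝ} (ht : 0 ≤ t) :
    sinh t ≤ (t - t ^ 3 / 3 + 2 * t ^ 5 / 15) * cosh t := by
  refine le_of_hasDerivAt_le_of_nonneg hasDerivAt_sinh
    (g := fun x => (x - x ^ 3 / 3 + 2 * x ^ 5 / 15) * cosh x)
    (g' := fun x =>
      (1 - x ^ 2 + 2 * x ^ 4 / 3) * cosh x + (x - x ^ 3 / 3 + 2 * x ^ 5 / 15) * sinh x)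
    (fun x => ?_) (by simp) (fun x hx => ?_) ht
  · exact ((((hasDerivAt_id' x).fun_sub ((hasDerivAt_pow 3 x).div_const 3)).fun_add
      (((hasDerivAt_pow 5 x).const_mul 2).div_const 15)).fun_mul (hasDerivAt_cosh x)).congr_deriv
      (by push_cast; ring)
  · have hc := cosh_pos x
    have hs := sinh_nonneg_iff.2 hx
    have hP : 0 ≤ x - x ^ 3 / 3 + 2 * x ^ 5 / 15 := by
      nlinarith [mul_nonneg hx (sq_nonneg (x ^ 2 - 5 / 4))]
    rcases le_or_gt (x ^ 2) (3 / 2) with hx2 | hx2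
    · -- multiplying the previous bound by the Taylor polynomial leaves `x⁶ (11 - 2x²) / 45 ≥ 0`
      have hrem : 0 ≤ x ^ 6 * (11 - 2 * x ^ 2) / 45 * cosh x :=
        mul_nonneg (div_nonneg (mul_nonneg (pow_nonneg hx 6) (by linarith)) (by norm_num)) hc.le
      nlinarith [mul_le_mul_of_nonneg_left (sub_pow_three_mul_cosh_le_sinh hx) hP]
    · have hQ : 0 ≤ -x ^ 2 + 2 * x ^ 4 / 3 := by nlinarith
      nlinarith [mul_nonneg hP hs, mul_nonneg hQ hc.le]

noncomputable def logCoshTaylor (t : ℝ) : ℝ := t ^ 2 / 2 - t ^ 4 / 12 + t ^ 6 / 45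

lemma cosh_le_exp_logCoshTaylor (t : ℝ) : cosh t ≤ exp (logCoshTaylor t) := by
  wlog ht : 0 ≤ t generalizing t
  · have heven : logCoshTaylor (-t) = logCoshTaylor t := by unfold logCoshTaylor; ring
    simpa only [cosh_neg, heven] using this (-t) (by linarith)
  rw [← log_le_iff_le_exp (cosh_pos t)]
  refine le_of_hasDerivAt_le_of_nonneg (f := fun x => log (cosh x)) (g := logCoshTaylor)
    (fun x => (hasDerivAt_cosh x).log (cosh_pos x).ne')
    (g' := fun x => x - x ^ 3 / 3 + 2 * x ^ 5 / 15) (fun x => ?_)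
    (by simp [logCoshTaylor]) (fun x hx => ?_) ht
  · exact ((((hasDerivAt_pow 2 x).div_const 2).fun_sub ((hasDerivAt_pow 4 x).div_const 12)).fun_add
      ((hasDerivAt_pow 6 x).div_const 45)).congr_deriv (by push_cast; ring)
  · rw [div_le_iff₀ (cosh_pos x)]
    exact sinh_le_tanh_taylor_mul_cosh hx

lemma logCoshTaylor_le {ε t : ℝ} (hε : ε ≤ 1 / 9) (hlo : 8 * ε ≤ t ^ 2) (hhi : t ^ 2 ≤ 25 / 9) :
    logCoshTaylor t ≤ (1 - ε) * t ^ 2 / 2 := by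
  -- `u ↦ 15u - 4u²` is concave, so on `[8ε, 25/9]` it suffices to check the endpoints
  have h : 90 * ε ≤ 15 * t ^ 2 - 4 * t ^ 4 := by
    nlinarith [mul_nonneg (sub_nonneg.2 hlo) (sub_nonneg.2 hhi)]
  unfold logCoshTaylor
  nlinarith [mul_nonneg (sq_nonneg t) (sub_nonneg.2 h)]

lemma cosh_le_exp_four_ninths_mul_sq {t : ℝ} (ht : 5 / 3 ≤ t) :
    cosh t ≤ exp (4 / 9 * t ^ 2) := by
  have h2t : 81 / 11 ≤ exp (2 * t) :=
    le_trans (by nlinarith) (quadratic_le_exp_of_nonneg (by linarith : (0 : ℝ) ≤ 2 * t))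
  have hexp : 46 / 81 ≤ exp (4 / 9 * t ^ 2 - t) :=
    le_trans (by nlinarith) (add_one_le_exp _)
  have hneg : exp (-t) * exp (2 * t) = exp t := by rw [← exp_add]; ring_nf
  calc cosh t = (exp t + exp (-t)) / 2 := cosh_eq t
    _ ≤ 46 / 81 * exp t := by nlinarith [exp_pos (-t), exp_pos t]
    _ ≤ exp (4 / 9 * t ^ 2 - t) * exp t := by gcongr
    _ = exp (4 / 9 * t ^ 2) := by rw [← exp_add]; ring_nf

end Real

theorem stmt_3 (ε : ℝ) (hε0 : 0 < ε) (hε1 : ε ≤ 1/9) (t : ℝ)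
    (ht : t ≥ (1 + ε) * Real.sqrt (8 * ε)) :
    Real.cosh t ≤ Real.exp ((1 - ε) * t^2 / 2) := by
  have hsqrt : √(8 * ε) ≤ t := (le_mul_of_one_le_left (sqrt_nonneg _) (by linarith)).trans ht
  have ht₀ : 0 ≤ t := (sqrt_nonneg _).trans hsqrt
  have hsq : 8 * ε ≤ t ^ 2 := (sqrt_le_left ht₀).1 hsqrt
  rcases le_total t (5 / 3) with hsmall | hlarge
  · exact (cosh_le_exp_logCoshTaylor t).trans
      (exp_le_exp.2 (logCoshTaylor_le hε1 hsq (by nlinarith)))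
  · exact (cosh_le_exp_four_ninths_mul_sq hlarge).trans (exp_le_exp.2 (by nlinarith))
end

section
/- Let 0 < ε ≤ 1/9 and u ≥ √(8ε). Then (1+ε)·u²/2 − log(cosh((1+ε)u)) ≥ ε²·u²/2. -/
/-!
With `v = (1 + ε) u` the claim reads `log (cosh v) ≤ c v² / 2` for `c = (1 + ε - ε²) / (1 + ε)²`.
Since `w tanh w ≤ 2 log (cosh w)`, the ratio `log (cosh w) / w²` decreases on `(0, ∞)`, so it
suffices to check the bound at `v₀ = (1 + ε) √(8ε)`. There the Taylor bound
`log (cosh x) ≤ x²/2 - x⁴/12 + x⁶/45`, obtained by integrating successive Taylor bounds of `tanh`,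
turns it into a polynomial inequality in `ε`.
-/

open Real Set

theorem monotoneOn_Ici_of_hasDerivAt_nonneg {f f' : ℝ → ℝ} {a : ℝ}
    (hf : ∀ x, HasDerivAt f (f' x) x) (hf' : ∀ x, a < x → 0 ≤ f' x) : MonotoneOn f (Ici a) :=
  monotoneOn_of_hasDerivWithinAt_nonneg (convex_Ici a)
    (fun x _ => (hf x).continuousAt.continuousWithinAt)
    (fun x _ => (hf x).hasDerivWithinAt) (fun x hx => hf' x (by simpa using hx))

namespace Real

theorem hasDerivAt_tanh (x : ℝ) : HasDerivAt tanh (1 - tanh x ^ 2) x := by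
  have hc := (cosh_pos x).ne'
  have h := (hasDerivAt_sinh x).div (hasDerivAt_cosh x) hc
  rw [show sinh / cosh = tanh from funext fun y => (tanh_eq_sinh_div_cosh y).symm] at h
  refine h.congr_deriv ?_
  rw [tanh_eq_sinh_div_cosh]
  field_simp

theorem hasDerivAt_log_cosh (x : ℝ) : HasDerivAt (fun y => log (cosh y)) (tanh x) x := by
  simpa only [← tanh_eq_sinh_div_cosh] using (hasDerivAt_cosh x).log (cosh_pos x).ne'

theorem tanh_nonneg {x : ℝ} (hx : 0 ≤ x) : 0 ≤ tanh x := by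
  rw [tanh_eq_sinh_div_cosh]
  exact div_nonneg (sinh_nonneg_iff.2 hx) (cosh_pos x).le

theorem tanh_le_self {x : ℝ} (hx : 0 ≤ x) : tanh x ≤ x := by
  have h := monotoneOn_Ici_of_hasDerivAt_nonneg (a := 0)
    (fun y => (hasDerivAt_id' y).fun_sub (hasDerivAt_tanh y))
    (fun y _ => by simp only [sub_sub_cancel]; positivity) self_mem_Ici hx hx
  simpa using h

theorem self_sub_cube_div_three_le_tanh {x : ℝ} (hx : 0 ≤ x) : x - x ^ 3 / 3 ≤ tanh x := by
  have hp : ∀ y : ℝ, HasDerivAt (fun y => y - y ^ 3 / 3) (1 - y ^ 2) y := fun y => by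
    refine ((hasDerivAt_id' y).fun_sub ((hasDerivAt_pow 3 y).div_const 3)).congr_deriv ?_
    ring
  have h := monotoneOn_Ici_of_hasDerivAt_nonneg (a := 0)
    (fun y => (hasDerivAt_tanh y).fun_sub (hp y))
    (fun y hy => by
      nlinarith [tanh_nonneg hy.le, tanh_le_self hy.le]) self_mem_Ici hx hx
  simpa using h

theorem tanh_le_taylor_five {x : ℝ} (hx : 0 ≤ x) :
    tanh x ≤ x - x ^ 3 / 3 + 2 * x ^ 5 / 15 := by
  have hp : ∀ y : ℝ, HasDerivAt (fun y => y - y ^ 3 / 3 + 2 * y ^ 5 / 15)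
      (1 - y ^ 2 + 2 * y ^ 4 / 3) y := fun y => by
    refine (((hasDerivAt_id' y).fun_sub ((hasDerivAt_pow 3 y).div_const 3)).fun_add
      (((hasDerivAt_pow 5 y).const_mul 2).div_const 15)).congr_deriv ?_
    push_cast; ring
  have h := monotoneOn_Ici_of_hasDerivAt_nonneg (a := 0)
    (fun y => (hp y).fun_sub (hasDerivAt_tanh y))
    (fun y hy => by
      -- `tanh y ^ 2 ≥ y ^ 2 - 2 y ^ 4 / 3`, trivially if `y ^ 2 ≥ 3`, else by squaring the cubic bound
      rcases le_total (y - y ^ 3 / 3) 0 with h | h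
      · nlinarith [sq_nonneg (tanh y), sq_nonneg y]
      · nlinarith [mul_le_mul (self_sub_cube_div_three_le_tanh hy.le)
          (self_sub_cube_div_three_le_tanh hy.le) h (tanh_nonneg hy.le), pow_nonneg hy.le 6])
    self_mem_Ici hx hx
  simpa using h

theorem log_cosh_le_taylor_six {x : ℝ} (hx : 0 ≤ x) :
    log (cosh x) ≤ x ^ 2 / 2 - x ^ 4 / 12 + x ^ 6 / 45 := by
  have hp : ∀ y : ℝ, HasDerivAt (fun y => y ^ 2 / 2 - y ^ 4 / 12 + y ^ 6 / 45)
      (y - y ^ 3 / 3 + 2 * y ^ 5 / 15) y := fun y => by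
    refine ((((hasDerivAt_pow 2 y).div_const 2).fun_sub
      ((hasDerivAt_pow 4 y).div_const 12)).fun_add
      ((hasDerivAt_pow 6 y).div_const 45)).congr_deriv ?_
    push_cast; ring
  have h := monotoneOn_Ici_of_hasDerivAt_nonneg (a := 0)
    (fun y => (hp y).fun_sub (hasDerivAt_log_cosh y))
    (fun y hy => sub_nonneg.2 (tanh_le_taylor_five hy.le)) self_mem_Ici hx hx
  simpa using h

theorem mul_tanh_le_two_mul_log_cosh {x : ℝ} (hx : 0 ≤ x) : x * tanh x ≤ 2 * log (cosh x) := by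
  have h := monotoneOn_Ici_of_hasDerivAt_nonneg (a := 0)
    (fun y => ((hasDerivAt_log_cosh y).const_mul 2).fun_sub
      ((hasDerivAt_id' y).fun_mul (hasDerivAt_tanh y)))
    (fun y hy => by
      -- the derivative is `(sinh y cosh y - y) / cosh y ^ 2` and `2 sinh y cosh y = sinh 2y ≥ 2y`
      have hsc : y ≤ sinh y * cosh y := by
        nlinarith [self_le_sinh_iff.2 (by linarith : (0:ℝ) ≤ 2 * y), sinh_two_mul y]
      simp only [one_mul, tanh_eq_sinh_div_cosh]
      field_simp
      nlinarith [cosh_sq_sub_sinh_sq y])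
    self_mem_Ici hx hx
  simpa using h

theorem antitoneOn_log_cosh_div_sq : AntitoneOn (fun x => log (cosh x) / x ^ 2) (Ioi 0) := by
  have hd : ∀ x : ℝ, 0 < x → HasDerivAt (fun x => log (cosh x) / x ^ 2)
      (x * (x * tanh x - 2 * log (cosh x)) / (x ^ 2) ^ 2) x := fun x hx =>
    ((hasDerivAt_log_cosh x).div (hasDerivAt_pow 2 x) (pow_pos hx 2).ne').congr_deriv
      (by push_cast; ring)
  refine antitoneOn_of_hasDerivWithinAt_nonpos (convex_Ioi 0)
    (fun x hx => (hd x hx).continuousAt.continuousWithinAt)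
    (fun x hx => (hd x (by simpa using hx)).hasDerivWithinAt) (fun x hx => ?_)
  rw [interior_Ioi] at hx
  exact div_nonpos_of_nonpos_of_nonneg (mul_nonpos_of_nonneg_of_nonpos (le_of_lt hx)
    (sub_nonpos.2 (mul_tanh_le_two_mul_log_cosh (le_of_lt hx)))) (by positivity)

end Real

theorem log_cosh_le_of_sqrt_le {ε v : ℝ} (hε0 : 0 < ε) (hε1 : ε ≤ 1 / 9)
    (hv : (1 + ε) * √(8 * ε) ≤ v) :
    log (cosh v) ≤ (1 + ε - ε ^ 2) / (1 + ε) ^ 2 * v ^ 2 / 2 := by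
  set v₀ := (1 + ε) * √(8 * ε)
  have hv₀ : 0 < v₀ := by positivity
  have hv₀_sq : v₀ ^ 2 = 8 * ε * (1 + ε) ^ 2 := by
    rw [mul_pow, sq_sqrt (by positivity)]; ring
  have h_at_v₀ : log (cosh v₀) ≤ 4 * ε * (1 + ε - ε ^ 2) := by
    refine (log_cosh_le_taylor_six hv₀.le).trans ?_
    rw [show v₀ ^ 4 = (v₀ ^ 2) ^ 2 by ring, show v₀ ^ 6 = (v₀ ^ 2) ^ 3 by ring, hv₀_sq]
    set s := 8 * ε * (1 + ε) ^ 2 with hs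
    have hs_le : s ≤ 800 * ε / 81 := by
      have : (1 + ε) ^ 2 ≤ 100 / 81 := by nlinarith
      rw [hs]; nlinarith
    have hs_ge : 64 * ε ^ 2 * (1 + 4 * ε) ≤ s ^ 2 := by rw [hs]; nlinarith [pow_pos hε0 3]
    nlinarith [mul_le_mul_of_nonneg_right hs_ge (by nlinarith : (0:ℝ) ≤ 1 / 12 - s / 45)]
  have h_ratio : log (cosh v) / v ^ 2 ≤ log (cosh v₀) / v₀ ^ 2 :=
    antitoneOn_log_cosh_div_sq hv₀ (hv₀.trans_le hv) hv
  have hv_pos : 0 < v ^ 2 := pow_pos (hv₀.trans_le hv) 2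
  rw [div_le_iff₀ hv_pos, hv₀_sq] at h_ratio
  refine h_ratio.trans ?_
  rw [div_mul_eq_mul_div, div_le_iff₀ (by positivity)]
  field_simp
  nlinarith [mul_le_mul_of_nonneg_right h_at_v₀ hv_pos.le]

theorem stmt_5 (ε : ℝ) (hε0 : 0 < ε) (hε1 : ε ≤ 1/9) (u : ℝ)
    (hu : u ≥ Real.sqrt (8 * ε)) :
    (1 + ε) * u^2 / 2 - Real.log (Real.cosh ((1 + ε) * u)) ≥ ε^2 * u^2 / 2 := by
  have h := log_cosh_le_of_sqrt_le hε0 hε1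
    (mul_le_mul_of_nonneg_left hu (by linarith : (0:ℝ) ≤ 1 + ε))
  have h_rhs : (1 + ε - ε ^ 2) / (1 + ε) ^ 2 * ((1 + ε) * u) ^ 2 / 2
      = (1 + ε) * u ^ 2 / 2 - ε ^ 2 * u ^ 2 / 2 := by
    field_simp
  linarith
end

section
/- Let β = 1 + ε + iR with 0 < ε ≤ 1/9, √(24ε) ≤ R ≤ π/√(128ε), and let 0 ≤ u ≤ √(8ε). Then Re(β u²/2 − log(cosh(β u))) = (1+ε)u²/2 − (1/2)·log(cosh²((1+ε)u) − sin²(uR)) ≥ ε u²/2. -/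
/-!
Write `βu = x + iy` with `x = (1+ε)u`, `y = uR`. Since `|cosh(x+iy)|² = cosh²x − sin²y`, the inequality reads
`cosh²x − sin²y ≤ e^{u²}`. The growth `cosh²x ≤ e^{x²} = e^{(1+ε)²u²}` exceeds `e^{u²}` by at most
`(2ε+ε²)u²·e`, and the lower bound on `R` makes the oscillating term large enough to absorb it:
by Jordan's inequality `sin²y ≥ y²/4 ≥ 6εu²`. The upper bound on `R` keeps `y ≤ π/4`, where Jordan's
inequality applies and `cosh(βu) ≠ 0`; together with the lower bound it forces `3072ε² ≤ π²`,
so `ε < 1/10`.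
-/

open Real

namespace Complex

theorem normSq_cosh_add_mul_I (x y : ℝ) :
    normSq (cosh (x + y * I)) = Real.cosh x ^ 2 - Real.sin y ^ 2 := by
  have hcosh : cosh (x + y * I)
      = (Real.cosh x * Real.cos y : ℝ) + (Real.sinh x * Real.sin y : ℝ) * I := by
    rw [cosh_add, cosh_mul_I, sinh_mul_I]
    push_cast
    ring
  rw [hcosh, normSq_add_mul_I]
  linear_combination
    Real.cosh x ^ 2 * Real.sin_sq_add_cos_sq y - Real.sin y ^ 2 * Real.cosh_sq_sub_sinh_sq x

theorem re_log_cosh_add_mul_I (x y : ℝ) :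
    (log (cosh (x + y * I))).re = 1 / 2 * Real.log (Real.cosh x ^ 2 - Real.sin y ^ 2) := by
  rw [log_re, ← normSq_cosh_add_mul_I, ← Complex.sq_norm, Real.log_pow]
  push_cast
  ring

end Complex

namespace Real

theorem exp_sub_exp_le_mul_exp (a b : ℝ) : exp b - exp a ≤ (b - a) * exp b :=
  calc exp b - exp a = exp b - exp (a - b) * exp b := by rw [← exp_add, sub_add_cancel]
    _ ≤ exp b - (a - b + 1) * exp b := by gcongr; exact add_one_le_exp _
    _ = (b - a) * exp b := by ring

theorem cosh_sq_le_exp_sq (x : ℝ) : cosh x ^ 2 ≤ exp (x ^ 2) := by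
  calc cosh x ^ 2 ≤ exp (x ^ 2 / 2) ^ 2 :=
        pow_le_pow_left₀ (cosh_pos x).le (cosh_le_exp_half_sq x) 2
    _ = exp (x ^ 2) := by rw [← exp_nat_mul]; ring_nf

theorem half_le_sin {y : ℝ} (hy0 : 0 ≤ y) (hy : y ≤ π / 2) : y / 2 ≤ sin y := by
  have hπ : 1 / 2 ≤ 2 / π := by rw [le_div_iff₀ pi_pos]; linarith [pi_le_four]
  calc y / 2 = 1 / 2 * y := by ring
    _ ≤ 2 / π * y := mul_le_mul_of_nonneg_right hπ hy0
    _ ≤ sin y := mul_le_sin hy0 hy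

theorem cosh_sq_sub_sin_sq_pos (x : ℝ) {y : ℝ} (hy0 : -(π / 2) < y) (hy : y < π / 2) :
    0 < cosh x ^ 2 - sin y ^ 2 := by
  have hcos := cos_pos_of_mem_Ioo ⟨hy0, hy⟩
  nlinarith [one_le_cosh x, sin_sq_add_cos_sq y]

theorem cosh_sq_sub_sin_sq_le_exp {ε u y : ℝ} (hε0 : 0 ≤ ε) (hε : ε ≤ 1 / 10) (hu : u ^ 2 ≤ 8 * ε)
    (hy0 : 0 ≤ y) (hyπ : y ≤ π / 2) (hy : 24 * ε * u ^ 2 ≤ y ^ 2) :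
    cosh ((1 + ε) * u) ^ 2 - sin y ^ 2 ≤ exp (u ^ 2) := by
  set b := ((1 + ε) * u) ^ 2
  have hb : b ≤ 1 :=
    calc b = (1 + ε) ^ 2 * u ^ 2 := by ring
      _ ≤ (1 + 1 / 10) ^ 2 * (8 * (1 / 10)) := by gcongr; linarith
      _ ≤ 1 := by norm_num
  have hexp_b : exp b ≤ 2.72 := (exp_le_exp.2 hb).trans (by linarith [exp_one_lt_d9])
  have hgap : exp b - exp (u ^ 2) ≤ (b - u ^ 2) * exp b := exp_sub_exp_le_mul_exp _ _
  have hsin : y ^ 2 / 4 ≤ sin y ^ 2 := by nlinarith [half_le_sin hy0 hyπ]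
  have hbu : b - u ^ 2 = (2 + ε) * ε * u ^ 2 := by ring
  nlinarith [cosh_sq_le_exp_sq ((1 + ε) * u),
    mul_nonneg (mul_nonneg hε0 (sq_nonneg u)) (exp_pos b).le]

theorem sq_mul_le_sq_of_le_div_sqrt {R a c : ℝ} (hc : 0 < c) (hR0 : 0 ≤ R) (hR : R ≤ a / √c) :
    R ^ 2 * c ≤ a ^ 2 := by
  have hRc : R * √c ≤ a := (le_div_iff₀ (sqrt_pos.2 hc)).1 hR
  calc R ^ 2 * c = (R * √c) ^ 2 := by rw [mul_pow, sq_sqrt hc.le]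
    _ ≤ a ^ 2 := pow_le_pow_left₀ (by positivity) hRc 2

end Real

open Complex in
theorem stmt_6_general (ε R u : ℝ) (hε0 : 0 < ε)
    (hR1 : Real.sqrt (24 * ε) ≤ R) (hR2 : R ≤ Real.pi / Real.sqrt (128 * ε))
    (hu0 : 0 ≤ u) (hu1 : u ≤ Real.sqrt (8 * ε))
    (β : ℂ) (hβ : β = 1 + ε + Complex.I * R) :
    (β * u^2 / 2 - Complex.log (Complex.cosh (β * u))).re
      = (1 + ε) * u^2 / 2
        - (1/2) * Real.log ((Real.cosh ((1 + ε) * u))^2 - (Real.sin (u * R))^2) ∧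
    (β * u^2 / 2 - Complex.log (Complex.cosh (β * u))).re ≥ ε * u^2 / 2 := by
  obtain ⟨hR0, hR⟩ := Real.sqrt_le_iff.1 hR1
  have hu : u ^ 2 ≤ 8 * ε := (Real.le_sqrt hu0 (by positivity)).1 hu1
  have hRε : R ^ 2 * (128 * ε) ≤ π ^ 2 := Real.sq_mul_le_sq_of_le_div_sqrt (by positivity) hR0 hR2
  have hε : ε ≤ 1 / 10 := by nlinarith [Real.pi_le_four, Real.pi_pos]
  have huR : u * R ≤ π / 4 :=
    (pow_le_pow_iff_left₀ (by positivity) (by positivity) two_ne_zero).1 (by nlinarith)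
  have hβu : β * u = ((1 + ε) * u : ℝ) + (u * R : ℝ) * I := by rw [hβ]; push_cast; ring
  have hβre : (β * u ^ 2 / 2).re = (1 + ε) * u ^ 2 / 2 := by simp [hβ, ← ofReal_pow]
  have heq : (β * u ^ 2 / 2 - log (cosh (β * u))).re = (1 + ε) * u ^ 2 / 2
      - 1 / 2 * Real.log (Real.cosh ((1 + ε) * u) ^ 2 - Real.sin (u * R) ^ 2) := by
    rw [sub_re, hβre, hβu, re_log_cosh_add_mul_I]
  refine ⟨heq, ?_⟩
  have hpos := Real.cosh_sq_sub_sin_sq_pos ((1 + ε) * u) (y := u * R) (by nlinarith [Real.pi_pos])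
    (by linarith [Real.pi_pos])
  have hle := Real.cosh_sq_sub_sin_sq_le_exp (y := u * R) hε0.le hε hu (by positivity)
    (by linarith [Real.pi_pos]) (by nlinarith)
  have hlog := (Real.log_le_iff_le_exp hpos).2 hle
  rw [heq]
  linarith

open Complex in
theorem stmt_6 (ε R u : ℝ) (hε0 : 0 < ε) (hε1 : ε ≤ 1/9)
    (hR1 : Real.sqrt (24 * ε) ≤ R) (hR2 : R ≤ Real.pi / Real.sqrt (128 * ε))
    (hu0 : 0 ≤ u) (hu1 : u ≤ Real.sqrt (8 * ε))
    (β : ℂ) (hβ : β = 1 + ε + Complex.I * R) :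
    (β * u^2 / 2 - Complex.log (Complex.cosh (β * u))).re
      = (1 + ε) * u^2 / 2
        - (1/2) * Real.log ((Real.cosh ((1 + ε) * u))^2 - (Real.sin (u * R))^2) ∧
    (β * u^2 / 2 - Complex.log (Complex.cosh (β * u))).re ≥ ε * u^2 / 2 :=
  stmt_6_general ε R u hε0 hR1 hR2 hu0 hu1 β hβ
end

section
/- For any complex β with Re β > 0 and any positive integer N, the Curie–Weiss partition function satisfies Z_{β,N} = √(βN/(2π)) · ∫_{-∞}^{∞} exp(−N f_β(u)) du, where f_β(u) = β u²/2 − log(cosh(β u)). -/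
/-! Hubbard–Stratonovich: the Gaussian integral `integral_cexp_quadratic` linearizes the square in
the exponent, `exp (β m² / (2N)) = √(βN/(2π)) ∫ exp (-Nβu²/2 + βmu) du`. Summing over the spins
then factorizes, `∑_σ exp (β (∑ σᵢ) u) = (2 cosh βu)^N`, and since `cosh βu ≠ 0` when `Re β > 0`
this power is `exp (N log cosh βu)` for the principal logarithm. -/

open Complex MeasureTheory

theorem Complex.cosh_ne_zero_of_re_ne_zero {z : ℂ} (hz : z.re ≠ 0) : cosh z ≠ 0 := by
  intro h
  have hexp : exp z = -exp (-z) := by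
    rw [cosh, div_eq_zero_iff] at h
    exact eq_neg_of_add_eq_zero_left (h.resolve_right two_ne_zero)
  have hre : Real.exp z.re = Real.exp (-z.re) := by
    simpa only [norm_exp, norm_neg, neg_re] using congrArg norm hexp
  exact hz (by linarith [Real.exp_injective hre])

theorem Complex.cosh_ofReal_mul_ne_zero {β : ℂ} (hβ : 0 < β.re) (u : ℝ) : cosh (β * u) ≠ 0 := by
  rcases eq_or_ne u 0 with rfl | hu
  · simp
  · exact cosh_ne_zero_of_re_ne_zero (by simpa [re_mul_ofReal] using ⟨hβ.ne', hu⟩)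

theorem Complex.cpow_mul_inv_cpow_of_re_pos {z : ℂ} (hz : 0 < z.re) (s : ℂ) :
    z ^ s * z⁻¹ ^ s = 1 := by
  have hz0 : z ≠ 0 := fun h => by simp [h] at hz
  have harg : z.arg ≠ Real.pi := fun h => by
    linarith [((arg_eq_pi_iff).mp h).1]
  rw [inv_cpow _ _ harg, mul_inv_cancel₀ (by simpa [cpow_eq_zero_iff] using fun h => absurd h hz0)]

theorem Complex.cosh_pow_eq_sum_spins (N : ℕ) (x : ℂ) :
    cosh x ^ N = ((2:ℂ) ^ N)⁻¹ *
      ∑ σ : Fin N → Bool, exp ((∑ i, (if σ i then (1:ℂ) else -1)) * x) := by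
  rw [cosh, div_pow, div_eq_inv_mul]
  congr 1
  calc (exp x + exp (-x)) ^ N
      = ∏ _i : Fin N, ∑ b : Bool, exp ((if b then (1:ℂ) else -1) * x) := by simp
    _ = ∑ σ : Fin N → Bool, ∏ i, exp ((if σ i then (1:ℂ) else -1) * x) := Fintype.prod_sum _
    _ = _ := by simp only [← exp_sum, Finset.sum_mul]

theorem Complex.exp_sq_div_eq_integral {b : ℂ} (hb : 0 < b.re) (c : ℂ) :
    exp (c ^ 2 / (4 * b)) = (b / Real.pi) ^ (1 / 2 : ℂ) * ∫ u : ℝ, exp (-b * u ^ 2 + c * u) := by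
  have hbπ : 0 < (b / Real.pi).re := by rw [div_ofReal_re]; positivity
  have h := integral_cexp_quadratic (b := -b) (by simpa using hb) c 0
  simp only [add_zero, neg_neg] at h
  rw [h, ← mul_assoc, ← inv_div b (Real.pi : ℂ), cpow_mul_inv_cpow_of_re_pos hbπ, one_mul]
  congr 1
  ring

theorem Complex.exp_neg_mul_sub_log_cosh {β : ℂ} (hβ : 0 < β.re) (N : ℕ) (u : ℝ) :
    exp (-(N:ℂ) * (β * u ^ 2 / 2 - log (cosh (β * u)))) =
      ((2:ℂ) ^ N)⁻¹ * ∑ σ : Fin N → Bool,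
        exp (-(N * β / 2) * u ^ 2 + β * (∑ i, (if σ i then (1:ℂ) else -1)) * u) := by
  have hexp : exp (-(N:ℂ) * (β * u ^ 2 / 2 - log (cosh (β * u)))) =
      exp (-(N * β / 2) * u ^ 2) * cosh (β * u) ^ N := by
    rw [show -(N:ℂ) * (β * u ^ 2 / 2 - log (cosh (β * u))) =
        -(N * β / 2) * u ^ 2 + N * log (cosh (β * u)) by ring,
      exp_add, exp_nat_mul, exp_log (cosh_ofReal_mul_ne_zero hβ u)]
  rw [hexp, cosh_pow_eq_sum_spins, Finset.mul_sum, Finset.mul_sum, Finset.mul_sum]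
  refine Finset.sum_congr rfl fun σ _ => ?_
  rw [exp_add]
  ring_nf

open scoped BigOperators in
theorem stmt_7 (β : ℂ) (hβ : 0 < β.re) (N : ℕ) (hN : 0 < N) :
    ((2:ℂ)^N)⁻¹ * ∑ σ : Fin N → Bool,
        Complex.exp (β / (2 * N) * (∑ i, (if σ i then (1:ℂ) else -1))^2)
      = (β * N / (2 * Real.pi)) ^ ((1:ℂ)/2) *
        ∫ u : ℝ, Complex.exp (-(N:ℂ) *
          (β * u^2 / 2 - Complex.log (Complex.cosh (β * u)))) := by
  have hb : 0 < (N * β / 2 : ℂ).re := by simp [hβ, hN]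
  have hHS (m : ℂ) : exp (β / (2 * N) * m ^ 2) = (N * β / 2 / Real.pi) ^ (1 / 2 : ℂ) *
      ∫ u : ℝ, exp (-(N * β / 2) * u ^ 2 + β * m * u) := by
    rw [← exp_sq_div_eq_integral hb]
    congr 1
    field_simp
    ring
  have hint (c : ℂ) : Integrable fun u : ℝ => exp (-(N * β / 2) * u ^ 2 + c * u) := by
    simpa using integrable_cexp_quadratic hb c 0
  simp_rw [hHS, exp_neg_mul_sub_log_cosh hβ, integral_const_mul]
  rw [integral_finsetSum _ fun σ _ => hint _, ← Finset.mul_sum,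
    show (N * β / 2 / Real.pi : ℂ) = β * N / (2 * Real.pi) by ring]
  ring
end

section
/- Let h_β(u) = u²/(2β) − log cosh u for complex u near 0 and complex β near 1, and let P₄(u) = (1/β − 1)·u²/2 + u⁴/12 be its fourth-order Taylor polynomial. Then for every complex u with |u| ≤ π/4, |h_β'(u) − P₄'(u)| ≤ 5|u|⁵. -/
/-! The parameter `β` cancels, since `u / β - (1 / β) * u = 0`, so the claim is the Taylor
estimate `‖tanh u - (u - u³/3)‖ ≤ 5‖u‖⁵`. Writing `tanh = sinh / cosh`, the numerator
`sinh u - (u - u³/3) cosh u` is `u⁵/6` plus the Taylor remainders of `sinh` (order 5) and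
`cosh` (order 4), both bounded through those of `exp`, while `‖cosh u‖ ≥ 1/4`
for `‖u‖ ≤ 1`. -/

open Complex Finset

lemma norm_exp_sub_sum_add_norm_exp_neg_sub_sum_le {x : ℂ} (hx : ‖x‖ ≤ 1) {n : ℕ}
    (hn : 0 < n) :
    ‖exp x - ∑ m ∈ range n, x ^ m / m.factorial‖
        + ‖exp (-x) - ∑ m ∈ range n, (-x) ^ m / m.factorial‖
      ≤ 2 * (‖x‖ ^ n * ((n.succ : ℝ) * (n.factorial * n : ℝ)⁻¹)) := by
  have hpos := exp_bound hx hn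
  have hneg := exp_bound (x := -x) (by rwa [norm_neg]) hn
  rw [norm_neg] at hneg
  linarith

lemma norm_sinh_sub_le {u : ℂ} (hu : ‖u‖ ≤ 1) :
    ‖sinh u - (u + u ^ 3 / 6)‖ ≤ ‖u‖ ^ 5 / 100 := by
  have hrem := norm_exp_sub_sum_add_norm_exp_neg_sub_sum_le hu (n := 5) (by norm_num)
  norm_num [Nat.factorial] at hrem
  have hsplit : sinh u - (u + u ^ 3 / 6)
      = ((exp u - ∑ m ∈ range 5, u ^ m / m.factorial)
        - (exp (-u) - ∑ m ∈ range 5, (-u) ^ m / m.factorial)) / 2 := by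
    simp only [sinh, sum_range_succ, sum_range_zero, Nat.factorial]
    push_cast
    ring
  rw [hsplit, norm_div, RCLike.norm_ofNat]
  linarith [norm_sub_le (exp u - ∑ m ∈ range 5, u ^ m / m.factorial)
    (exp (-u) - ∑ m ∈ range 5, (-u) ^ m / m.factorial)]

lemma norm_cosh_sub_le {u : ℂ} (hu : ‖u‖ ≤ 1) :
    ‖cosh u - (1 + u ^ 2 / 2)‖ ≤ 5 * ‖u‖ ^ 4 / 96 := by
  have hrem := norm_exp_sub_sum_add_norm_exp_neg_sub_sum_le hu (n := 4) (by norm_num)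
  norm_num [Nat.factorial] at hrem
  have hsplit : cosh u - (1 + u ^ 2 / 2)
      = ((exp u - ∑ m ∈ range 4, u ^ m / m.factorial)
        + (exp (-u) - ∑ m ∈ range 4, (-u) ^ m / m.factorial)) / 2 := by
    simp only [cosh, sum_range_succ, sum_range_zero, Nat.factorial]
    push_cast
    ring
  rw [hsplit, norm_div, RCLike.norm_ofNat]
  linarith [norm_add_le (exp u - ∑ m ∈ range 4, u ^ m / m.factorial)
    (exp (-u) - ∑ m ∈ range 4, (-u) ^ m / m.factorial)]

lemma one_quarter_le_norm_cosh {u : ℂ} (hu : ‖u‖ ≤ 1) : 1 / 4 ≤ ‖cosh u‖ := by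
  have hu2 : ‖u‖ ^ 2 ≤ 1 := pow_le_one₀ (norm_nonneg u) hu
  have hu4 : ‖u‖ ^ 4 ≤ 1 := pow_le_one₀ (norm_nonneg u) hu
  have hsquare : ‖u ^ 2 / 2‖ = ‖u‖ ^ 2 / 2 := by simp [norm_pow]
  calc (1 / 4 : ℝ)
      ≤ ‖(1 : ℂ)‖ - ‖cosh u - (1 + u ^ 2 / 2)‖ - ‖u ^ 2 / 2‖ := by
        rw [norm_one, hsquare]; linarith [norm_cosh_sub_le hu]
    _ ≤ ‖cosh u‖ := by
        have htriangle := norm_sub_le_of_le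
          (norm_sub_le (cosh u) (cosh u - (1 + u ^ 2 / 2))) (le_refl ‖u ^ 2 / 2‖)
        rw [show cosh u - (cosh u - (1 + u ^ 2 / 2)) - u ^ 2 / 2 = 1 by ring] at htriangle
        linarith

lemma norm_sinh_sub_mul_cosh_le {u : ℂ} (hu : ‖u‖ ≤ 1) :
    ‖sinh u - (u - u ^ 3 / 3) * cosh u‖ ≤ 5 / 4 * ‖u‖ ^ 5 := by
  have hsplit : sinh u - (u - u ^ 3 / 3) * cosh u
      = u ^ 5 / 6 + (sinh u - (u + u ^ 3 / 6))
        - (u - u ^ 3 / 3) * (cosh u - (1 + u ^ 2 / 2)) := by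
    ring
  have hcubic : ‖u - u ^ 3 / 3‖ ≤ ‖u‖ + ‖u‖ ^ 3 / 3 := by
    have := norm_sub_le u (u ^ 3 / 3)
    rw [norm_div, norm_pow] at this
    simpa using this
  have hcosh_rem : ‖(u - u ^ 3 / 3) * (cosh u - (1 + u ^ 2 / 2))‖
      ≤ (‖u‖ + ‖u‖ ^ 3 / 3) * (5 * ‖u‖ ^ 4 / 96) := by
    rw [norm_mul]
    exact mul_le_mul hcubic (norm_cosh_sub_le hu) (norm_nonneg _) (by positivity)
  have hquintic : ‖u ^ 5 / 6‖ = ‖u‖ ^ 5 / 6 := by simp [norm_pow]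
  have hu7 : ‖u‖ ^ 7 ≤ ‖u‖ ^ 5 := pow_le_pow_of_le_one (norm_nonneg u) hu (by norm_num)
  calc ‖sinh u - (u - u ^ 3 / 3) * cosh u‖
      ≤ ‖u ^ 5 / 6‖ + ‖sinh u - (u + u ^ 3 / 6)‖
          + ‖(u - u ^ 3 / 3) * (cosh u - (1 + u ^ 2 / 2))‖ := by
        rw [hsplit]; exact norm_sub_le_of_le (norm_add_le _ _) le_rfl
    _ ≤ ‖u‖ ^ 5 / 6 + ‖u‖ ^ 5 / 100
          + (‖u‖ + ‖u‖ ^ 3 / 3) * (5 * ‖u‖ ^ 4 / 96) := by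
        rw [hquintic]; gcongr; exact norm_sinh_sub_le hu
    _ ≤ 5 / 4 * ‖u‖ ^ 5 := by nlinarith [pow_nonneg (norm_nonneg u) 5]

lemma norm_tanh_sub_le {u : ℂ} (hu : ‖u‖ ≤ 1) :
    ‖tanh u - (u - u ^ 3 / 3)‖ ≤ 5 * ‖u‖ ^ 5 := by
  have hcosh := one_quarter_le_norm_cosh hu
  have hcosh0 : cosh u ≠ 0 := norm_pos_iff.mp (by linarith)
  have hquot :
      tanh u - (u - u ^ 3 / 3) = (sinh u - (u - u ^ 3 / 3) * cosh u) / cosh u := by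
    rw [tanh_eq_sinh_div_cosh]
    field_simp
  calc ‖tanh u - (u - u ^ 3 / 3)‖
      = ‖sinh u - (u - u ^ 3 / 3) * cosh u‖ / ‖cosh u‖ := by rw [hquot, norm_div]
    _ ≤ 5 / 4 * ‖u‖ ^ 5 / (1 / 4) :=
        div_le_div₀ (by positivity) (norm_sinh_sub_mul_cosh_le hu) (by norm_num) hcosh
    _ = 5 * ‖u‖ ^ 5 := by ring

theorem stmt_10_general (β : ℂ) (u : ℂ) (hu : ‖u‖ ≤ Real.pi / 4) :
    ‖(u / β - Complex.tanh u) - ((1/β - 1) * u + u^3 / 3)‖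
      ≤ 5 * ‖u‖ ^ 5 := by
  have hu1 : ‖u‖ ≤ 1 := hu.trans (by linarith [Real.pi_le_four])
  have hβ_cancels :
      (u / β - tanh u) - ((1 / β - 1) * u + u ^ 3 / 3) = -(tanh u - (u - u ^ 3 / 3)) := by
    ring
  rw [hβ_cancels, norm_neg]
  exact norm_tanh_sub_le hu1

theorem stmt_10 (β : ℂ) (hβ : β ≠ 0) (u : ℂ) (hu : ‖u‖ ≤ Real.pi / 4) :
    ‖(u / β - Complex.tanh u) - ((1/β - 1) * u + u^3 / 3)‖
      ≤ 5 * ‖u‖ ^ 5 :=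
  stmt_10_general β u hu
end
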